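/- arXiv:0712.2299 — 2 statements merged into one kernel-verified Lean document; each statement's English description precedes it below -/
import Mathlib

section
/- Let G' be the group of matrices of the form [[1, t, z], [0, 1, 0], [0, 0, e^{2πit}]] with t ∈ ℝ, z ∈ ℂ, and let H' be the subgroup with t ∈ ℤ and z ∈ ℤ + ℤi. Then the inclusion homomorphism H' ↪ GL(3, ℂ) does not extend to a continuous injective homomorphism from G' into any abelian group; in particular, any continuous homomorphism φ̂ : G' → A with A abelian is trivial on the elements [[1,0,z],[0,1,0],[0,0,1]] with z ∈ ℤ + ℤi, hence cannot agree with the inclusion on H'. -/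
open Matrix

/-- The matrix [[1, t, z], [0, 1, 0], [0, 0, e^{2πit}]]. -/
noncomputable def gMat (t : ℝ) (z : ℂ) : Matrix (Fin 3) (Fin 3) ℂ :=
  !![1, (t : ℂ), z; 0, 1, 0; 0, 0, Complex.exp (2 * Real.pi * Complex.I * t)]

/-- The group G' of such matrices with t ∈ ℝ, z ∈ ℂ. -/
def Gset : Set (Matrix (Fin 3) (Fin 3) ℂ) := {m | ∃ (t : ℝ) (z : ℂ), m = gMat t z}

/-- The subgroup H' with t ∈ ℤ and z ∈ ℤ + ℤi. -/
def Hset : Set (Matrix (Fin 3) (Fin 3) ℂ) :=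
  {m | ∃ (a b c : ℤ), m = gMat (a : ℝ) ((b : ℂ) + (c : ℂ) * Complex.I)}

lemma gmul (t s : ℝ) (z w : ℂ) :
    gMat t z * gMat s w
      = gMat (t + s) (w + z * Complex.exp (2 * Real.pi * Complex.I * s)) := by
  have he : Complex.exp (2 * Real.pi * Complex.I * t) *
      Complex.exp (2 * Real.pi * Complex.I * s)
      = Complex.exp (2 * Real.pi * Complex.I * ((t : ℂ) + s)) := by
    rw [← Complex.exp_add]; ring_nf
  ext i j
  fin_cases i <;> fin_cases j <;>
    simp [gMat, Matrix.mul_apply, Fin.sum_univ_succ, Matrix.vecHead, Matrix.vecTail, he] <;> push_cast <;> ring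

lemma ehalf : Complex.exp (2 * Real.pi * Complex.I * ((-(1/2) : ℝ) : ℂ)) = -1 := by
  have : (2 * Real.pi * Complex.I * ((-(1/2) : ℝ) : ℂ)) = -(Real.pi * Complex.I) := by
    push_cast; ring
  rw [this, Complex.exp_neg, Complex.exp_pi_mul_I]
  norm_num

lemma ezero : Complex.exp (2 * Real.pi * Complex.I * ((0 : ℝ) : ℂ)) = 1 := by
  simp

/-- Any continuous map φ̂ from G' to an abelian group A that is a homomorphism
on G' is trivial on the elements [[1,0,z],[0,1,0],[0,0,1]] with z ∈ ℤ + ℤi;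
hence it is not injective on H', so it cannot agree with the inclusion
H' ↪ GL(3,ℂ) on H'. -/
theorem stmt17 (A : Type*) [CommGroup A] [TopologicalSpace A]
    (φ : Matrix (Fin 3) (Fin 3) ℂ → A) (hcont : Continuous φ)
    (hhom : ∀ g ∈ Gset, ∀ h ∈ Gset, φ (g * h) = φ g * φ h) :
    (∀ b c : ℤ, φ (gMat 0 ((b : ℂ) + (c : ℂ) * Complex.I)) = 1) ∧
    ¬ Set.InjOn φ Hset := by
  have hGm : ∀ (t : ℝ) (z : ℂ), gMat t z ∈ Gset := fun t z => ⟨t, z, rfl⟩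
  -- φ of the identity-like element is 1
  have hφ0 : φ (gMat 0 0) = 1 := by
    have h := hhom _ (hGm 0 0) _ (hGm 0 0)
    rw [gmul, ezero] at h
    simp only [add_zero, zero_add, mul_one, zero_mul] at h
    exact (right_eq_mul.mp h)
  have key : ∀ u : ℂ, φ (gMat 0 u) = 1 := by
    intro u
    -- commutation relation gives φ(gMat 0 (-v)) = φ(gMat 0 v)
    have hneg : ∀ v : ℂ, φ (gMat 0 (-v)) = φ (gMat 0 v) := by
      intro v
      have h1 := hhom _ (hGm (1/2) v) _ (hGm (-(1/2)) 0)
      have h2 := hhom _ (hGm (-(1/2)) 0) _ (hGm (1/2) v)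
      rw [gmul, ehalf] at h1
      rw [gmul] at h2
      norm_num at h1 h2
      rw [h1, h2, mul_comm]
    -- squares are trivial
    have hsq : ∀ v : ℂ, φ (gMat 0 v) * φ (gMat 0 v) = 1 := by
      intro v
      have h := hhom _ (hGm 0 v) _ (hGm 0 (-v))
      rw [gmul, ezero] at h
      simp only [add_zero, mul_one, neg_add_cancel] at h
      rw [hφ0, hneg v] at h
      exact h.symm
    have hdouble := hhom _ (hGm 0 (u/2)) _ (hGm 0 (u/2))
    rw [gmul, ezero] at hdouble
    simp only [add_zero, mul_one] at hdouble
    have : u / 2 + u / 2 = u := by ring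
    rw [this] at hdouble
    rw [hdouble, hsq]
  refine ⟨fun b c => key _, ?_⟩
  intro hinj
  have m1 : gMat 0 (((1:ℤ) : ℂ) + ((0:ℤ) : ℂ) * Complex.I) ∈ Hset :=
    ⟨0, 1, 0, by norm_num⟩
  have m2 : gMat 0 (((0:ℤ) : ℂ) + ((1:ℤ) : ℂ) * Complex.I) ∈ Hset :=
    ⟨0, 0, 1, by norm_num⟩
  have hφeq : φ (gMat 0 (((1:ℤ) : ℂ) + ((0:ℤ) : ℂ) * Complex.I))
      = φ (gMat 0 (((0:ℤ) : ℂ) + ((1:ℤ) : ℂ) * Complex.I)) := by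
    rw [key, key]
  have := hinj m1 m2 hφeq
  have h02 := congrFun (congrFun this 0) 2
  simp [gMat, Complex.ext_iff] at h02
end

section
/- The commutator subgroup of the group G' = {[[1, t, z], [0, 1, 0], [0, 0, e^{2πit}]] : t ∈ ℝ, z ∈ ℂ} contains every matrix [[1, 0, w], [0, 1, 0], [0, 0, 1]] with w ∈ ℂ. -/
open Matrix

/-- G' as a set of elements of GL(3,ℂ). -/
def GsetGL : Set (GL (Fin 3) ℂ) :=
  {g | ∃ (t : ℝ) (z : ℂ), (g : Matrix (Fin 3) (Fin 3) ℂ) = gMat t z}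

lemma gMat_mul (t s : ℝ) (z y : ℂ) :
    gMat t z * gMat s y = gMat (t + s) (y + z * Complex.exp (2 * Real.pi * Complex.I * s)) := by
  ext i j
  fin_cases i <;> fin_cases j <;>
    simp [gMat, Matrix.mul_apply, Fin.sum_univ_succ, Complex.exp_add, mul_add, Matrix.vecHead, Matrix.vecTail] <;>
    push_cast <;> ring

lemma gMat_zero : gMat 0 0 = 1 := by
  ext i j
  fin_cases i <;> fin_cases j <;> simp [gMat, Matrix.one_apply, Matrix.vecHead, Matrix.vecTail]

noncomputable def gGL (t : ℝ) (z : ℂ) : GL (Fin 3) ℂ where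
  val := gMat t z
  inv := gMat (-t) (-z * Complex.exp (2 * Real.pi * Complex.I * (-t : ℝ)))
  val_inv := by
    rw [gMat_mul]
    rw [show t + -t = 0 by ring, show (-z * Complex.exp (2 * Real.pi * Complex.I * ((-t : ℝ) : ℂ))
      + z * Complex.exp (2 * Real.pi * Complex.I * ((-t : ℝ) : ℂ))) = 0 by ring, gMat_zero]
  inv_val := by
    rw [gMat_mul]
    rw [show -t + t = 0 by ring]
    have h : Complex.exp (2 * Real.pi * Complex.I * ((-t : ℝ) : ℂ))
        * Complex.exp (2 * Real.pi * Complex.I * (t : ℂ)) = 1 := by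
      rw [← Complex.exp_add, show (2 * (Real.pi:ℂ) * Complex.I * ((-t : ℝ) : ℂ)
        + 2 * Real.pi * Complex.I * (t : ℂ)) = 0 by push_cast; ring, Complex.exp_zero]
    rw [show (z + -z * Complex.exp (2 * Real.pi * Complex.I * ((-t : ℝ) : ℂ))
      * Complex.exp (2 * Real.pi * Complex.I * (t : ℂ))) = z + -z *
      (Complex.exp (2 * Real.pi * Complex.I * ((-t : ℝ) : ℂ))
      * Complex.exp (2 * Real.pi * Complex.I * (t : ℂ))) by ring, h]
    simp [gMat_zero]

/-- The commutator subgroup of G' contains every matrix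
[[1,0,w],[0,1,0],[0,0,1]] with w ∈ ℂ. -/
theorem stmt18 :
    ∀ w : ℂ, ∃ u ∈ Subgroup.closure
        {c : GL (Fin 3) ℂ | ∃ g ∈ GsetGL, ∃ h ∈ GsetGL, c = g * h * g⁻¹ * h⁻¹},
      (u : Matrix (Fin 3) (Fin 3) ℂ) = gMat 0 w := by
  intro w
  set a : GL (Fin 3) ℂ := gGL (1/2) 0
  set b : GL (Fin 3) ℂ := gGL 0 (-w/2)
  refine ⟨a * b * a⁻¹ * b⁻¹, Subgroup.subset_closure ⟨a, ⟨1/2, 0, rfl⟩, b, ⟨0, -w/2, rfl⟩, rfl⟩, ?_⟩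
  show (gMat (1/2) 0 * gMat 0 (-w/2) *
    gMat (-(1/2)) (-0 * Complex.exp (2 * Real.pi * Complex.I * ((-(1/2) : ℝ) : ℂ))) *
    gMat (-0) (-(-w/2) * Complex.exp (2 * Real.pi * Complex.I * ((-0 : ℝ) : ℂ)))) = gMat 0 w
  rw [gMat_mul, gMat_mul, gMat_mul]
  have h0 : ((1:ℝ)/2 + 0 + -(1/2) + -0) = 0 := by ring
  rw [h0]
  congr 1
  have e1 : Complex.exp (2 * Real.pi * Complex.I * ((-(1/2) : ℝ) : ℂ)) = -1 := by
    push_cast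
    rw [show (2 * (Real.pi:ℂ) * Complex.I * -(1/2)) = -(Real.pi * Complex.I) by ring]
    rw [Complex.exp_neg, Complex.exp_pi_mul_I]
    norm_num
  have e0 : Complex.exp (2 * Real.pi * Complex.I * ((0 : ℝ) : ℂ)) = 1 := by
    simp
  have e0' : Complex.exp (2 * Real.pi * Complex.I * ((-0 : ℝ) : ℂ)) = 1 := by
    simp
  rw [e1, e0, e0']
  push_cast [e1]
  ring
end
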